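/- In a dual weak brace S, for every a ∈ S and every idempotent e, a · e = e · a and a · e is an idempotent, where a · b := -a + a ∘ b - b. -/

import Mathlib

/-- A weak brace: `(S,+)` and `(S,∘)` are inverse semigroups satisfying
`a ∘ (b + c) = a ∘ b - a + a ∘ c` and `a ∘ a⁻ = -a + a`. -/
class WeakBrace (S : Type*) where
  add : S → S → S
  mul : S → S → S
  neg : S → S
  inv : S → S
  add_assoc : ∀ a b c : S, add (add a b) c = add a (add b c)
  mul_assoc : ∀ a b c : S, mul (mul a b) c = mul a (mul b c)
  add_reg : ∀ a : S, add (add a (neg a)) a = a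
  neg_reg : ∀ a : S, add (add (neg a) a) (neg a) = neg a
  neg_unique : ∀ a x : S, add (add a x) a = a → add (add x a) x = x → x = neg a
  mul_reg : ∀ a : S, mul (mul a (inv a)) a = a
  inv_reg : ∀ a : S, mul (mul (inv a) a) (inv a) = inv a
  inv_unique : ∀ a x : S, mul (mul a x) a = a → mul (mul x a) x = x → x = inv a
  distrib : ∀ a b c : S, mul a (add b c) = add (add (mul a b) (neg a)) (mul a c)
  link : ∀ a : S, mul a (inv a) = add (neg a) a

/-- A dual weak brace: a weak brace whose multiplicative semigroup is Clifford. -/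
class DualWeakBrace (S : Type*) extends WeakBrace S where
  clifford : ∀ a : S, WeakBrace.mul a (WeakBrace.inv a) = WeakBrace.mul (WeakBrace.inv a) a

namespace WeakBrace

variable {S : Type*} [WeakBrace S]

/-- `λ_a(b) = -a + a ∘ b`. -/
def lam (a b : S) : S := add (neg a) (mul a b)

/-- `ρ_b(a) = (-a + a ∘ b)⁻ ∘ a ∘ b`. -/
def rho (b a : S) : S := mul (mul (inv (lam a b)) a) b

/-- `a · b = -a + a ∘ b - b`. -/
def cdot (a b : S) : S := add (add (neg a) (mul a b)) (neg b)

/-- `a⁰ = a - a`. -/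
def sq (a : S) : S := add a (neg a)

/-- Additive idempotent (the sets of idempotents of `+` and `∘` coincide). -/
def IsIdem (e : S) : Prop := add e e = e

/-- `[a,b]₊ = -a - b + a + b`. -/
def brkt (a b : S) : S := add (add (add (neg a) (neg b)) a) b

/-- `I` is a full inverse subsemigroup of `(S,+)`. -/
def IsFullAddSub (I : Set S) : Prop :=
  (∀ e : S, IsIdem e → e ∈ I) ∧ (∀ x ∈ I, ∀ y ∈ I, add x y ∈ I) ∧ (∀ x ∈ I, neg x ∈ I)

/-- `I` is a normal subsemigroup of `(S,+)`. -/
def IsNormalAdd (I : Set S) : Prop :=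
  IsFullAddSub I ∧ ∀ a : S, ∀ x ∈ I, add (add (neg a) x) a ∈ I

/-- `I` is a normal subsemigroup of `(S,∘)`. -/
def IsNormalMul (I : Set S) : Prop :=
  (∀ e : S, IsIdem e → e ∈ I) ∧ (∀ x ∈ I, ∀ y ∈ I, mul x y ∈ I) ∧ (∀ x ∈ I, inv x ∈ I) ∧
    ∀ a : S, ∀ x ∈ I, mul (mul (inv a) x) a ∈ I

/-- `I` is a left ideal of the weak brace `S`. -/
def IsLeftIdeal (I : Set S) : Prop :=
  IsFullAddSub I ∧ ∀ a : S, ∀ x ∈ I, lam a x ∈ I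

/-- `I` is an ideal of the weak brace `S`. -/
def IsIdeal (I : Set S) : Prop :=
  IsNormalAdd I ∧ (∀ a : S, ∀ x ∈ I, lam a x ∈ I) ∧ IsNormalMul I

/-- The socle `Soc(S)`. -/
def Soc (S : Type*) [WeakBrace S] : Set S :=
  {a | ∀ b : S, add a b = mul a b ∧ add a b = add b a}

/-- The annihilator `Ann(S)`. -/
def Ann (S : Type*) [WeakBrace S] : Set S :=
  {a | ∀ b : S, add a b = add b a ∧ add a b = mul a b ∧ mul a b = mul b a}

/-- The congruence `a ∼_I b ⟺ a⁰ = b⁰ and -a + b ∈ I` associated to an ideal `I`. -/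
def simI (I : Set S) (a b : S) : Prop := sq a = sq b ∧ add (neg a) b ∈ I

/-- Membership in the inverse subsemigroup of `(S,+)` generated by a set `X`. -/
inductive genAdd (X : Set S) : S → Prop
  | base : ∀ x ∈ X, genAdd X x
  | add : ∀ a b : S, genAdd X a → genAdd X b → genAdd X (add a b)
  | neg : ∀ a : S, genAdd X a → genAdd X (neg a)

/-- `X · Y`: the additive inverse subsemigroup generated by the elements `x · y`. -/
def cdotSet (X Y : Set S) : Set S :=
  {s | genAdd {z | ∃ x ∈ X, ∃ y ∈ Y, z = cdot x y} s}

/-- `S^(n)` for `n ≥ 1`: `S^(1) = S`, `S^(n+1) = S^(n) · S`. -/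
def Spow (S : Type*) [WeakBrace S] : ℕ → Set S
  | 0 => Set.univ
  | 1 => Set.univ
  | (n+2) => cdotSet (Spow S (n+1)) Set.univ

end WeakBrace

/-! Both `(S,+)` and `(S,∘)` are Clifford inverse semigroups with the same idempotents, so every
idempotent is central for both operations, and `f ∘ e = f + e` for idempotents `e, f`.
For an idempotent `e`, `λ_a(e) = -a + a ∘ e` is an idempotent that coincides with the additive
identity `-(a ∘ e) + a ∘ e = (a ∘ a⁻) ∘ e = (-a + a) + e` of `a ∘ e`; hence `a ∘ e = a + e`.
Then `a · e` and `e · a` both reduce to the idempotent `(-a + a) + e`. -/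

structure IsInverseSemigroup {S : Type*} (op : S → S → S) (iv : S → S) : Prop where
  assoc : ∀ a b c : S, op (op a b) c = op a (op b c)
  op_iv_op : ∀ a : S, op (op a (iv a)) a = a
  iv_op_iv : ∀ a : S, op (op (iv a) a) (iv a) = iv a
  eq_iv : ∀ a x : S, op (op a x) a = a → op (op x a) x = x → x = iv a

namespace IsInverseSemigroup

variable {S : Type*} {op : S → S → S} {iv : S → S} (h : IsInverseSemigroup op iv)
include h

local infixl:70 " ⬝ " => op

theorem iv_iv (a : S) : iv (iv a) = a :=
  (h.eq_iv (iv a) a (h.iv_op_iv a) (h.op_iv_op a)).symm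

theorem iv_eq_self_of_idem {e : S} (he : e ⬝ e = e) : iv e = e :=
  (h.eq_iv e e (by rw [he, he]) (by rw [he, he])).symm

theorem op_iv_idem (a : S) : a ⬝ iv a ⬝ (a ⬝ iv a) = a ⬝ iv a := by
  rw [← h.assoc, h.op_iv_op]

theorem iv_op_idem (a : S) : iv a ⬝ a ⬝ (iv a ⬝ a) = iv a ⬝ a := by
  rw [← h.assoc, h.iv_op_iv]

theorem idem_op_idem {e f : S} (he : e ⬝ e = e) (hf : f ⬝ f = f) : e ⬝ f ⬝ (e ⬝ f) = e ⬝ f := by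
  have heL (y : S) : e ⬝ (e ⬝ y) = e ⬝ y := by rw [← h.assoc, he]
  have hfL (y : S) : f ⬝ (f ⬝ y) = f ⬝ y := by rw [← h.assoc, hf]
  set x := iv (e ⬝ f)
  have hxL (y : S) : x ⬝ (e ⬝ (f ⬝ (x ⬝ y))) = x ⬝ y := by
    simpa only [h.assoc] using congrArg (· ⬝ y) (h.iv_op_iv (e ⬝ f))
  -- `f x e` is also an inverse of `e f`, so it equals `x`
  have hx : f ⬝ x ⬝ e = x := by
    apply h.eq_iv
    · have := h.op_iv_op (e ⬝ f)
      simp only [h.assoc] at this ⊢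
      rwa [hfL, heL]
    · simp only [h.assoc]
      rw [heL, hfL, hxL]
  have hxx : x ⬝ x = x := by
    conv_lhs => rw [← hx]
    simp only [h.assoc]
    rw [hxL, ← h.assoc, hx]
  have hef : e ⬝ f = x := by rw [← h.iv_iv (e ⬝ f), h.iv_eq_self_of_idem hxx]
  rwa [hef]

theorem idem_comm {e f : S} (he : e ⬝ e = e) (hf : f ⬝ f = f) : e ⬝ f = f ⬝ e := by
  have heL (y : S) : e ⬝ (e ⬝ y) = e ⬝ y := by rw [← h.assoc, he]
  have hfL (y : S) : f ⬝ (f ⬝ y) = f ⬝ y := by rw [← h.assoc, hf]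
  have hef := h.idem_op_idem he hf
  have hfe := h.idem_op_idem hf he
  have : f ⬝ e = iv (e ⬝ f) := by
    apply h.eq_iv
    · simp only [h.assoc] at hef ⊢
      rwa [hfL, heL]
    · simp only [h.assoc] at hfe ⊢
      rwa [heL, hfL]
  rw [this, h.iv_eq_self_of_idem hef]

theorem iv_op (a b : S) : iv (a ⬝ b) = iv b ⬝ iv a := by
  have hc : b ⬝ iv b ⬝ (iv a ⬝ a) = iv a ⬝ a ⬝ (b ⬝ iv b) :=
    h.idem_comm (h.op_iv_idem b) (h.iv_op_idem a)
  symm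
  apply h.eq_iv
  · calc a ⬝ b ⬝ (iv b ⬝ iv a) ⬝ (a ⬝ b) = a ⬝ (b ⬝ iv b ⬝ (iv a ⬝ a) ⬝ b) := by
          simp only [h.assoc]
      _ = a ⬝ iv a ⬝ a ⬝ (b ⬝ iv b ⬝ b) := by rw [hc]; simp only [h.assoc]
      _ = a ⬝ b := by rw [h.op_iv_op, h.op_iv_op]
  · calc iv b ⬝ iv a ⬝ (a ⬝ b) ⬝ (iv b ⬝ iv a) = iv b ⬝ (iv a ⬝ a ⬝ (b ⬝ iv b) ⬝ iv a) := by
          simp only [h.assoc]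
      _ = iv b ⬝ b ⬝ iv b ⬝ (iv a ⬝ a ⬝ iv a) := by rw [← hc]; simp only [h.assoc]
      _ = iv b ⬝ iv a := by rw [h.iv_op_iv, h.iv_op_iv]

theorem op_comm_of_idem (hc : ∀ a, a ⬝ iv a = iv a ⬝ a) {e : S} (he : e ⬝ e = e) (x : S) :
    e ⬝ x = x ⬝ e := by
  have hA : e ⬝ (x ⬝ iv x) = x ⬝ iv x ⬝ e := h.idem_comm he (h.op_iv_idem x)
  have hex : x ⬝ iv x ⬝ e = iv x ⬝ (e ⬝ x) := by
    have hcex := hc (e ⬝ x)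
    rw [h.iv_op, h.iv_eq_self_of_idem he] at hcex
    calc x ⬝ iv x ⬝ e = e ⬝ (x ⬝ iv x) ⬝ e := by rw [hA, h.assoc _ e e, he]
      _ = e ⬝ x ⬝ (iv x ⬝ e) := by simp only [h.assoc]
      _ = iv x ⬝ e ⬝ (e ⬝ x) := hcex
      _ = iv x ⬝ (e ⬝ x) := by rw [h.assoc _ e, ← h.assoc e e, he]
  calc e ⬝ x = e ⬝ (x ⬝ iv x ⬝ x) := by rw [h.op_iv_op]
    _ = x ⬝ (iv x ⬝ (e ⬝ x)) := by rw [← h.assoc, hA]; simp only [h.assoc]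
    _ = x ⬝ (iv x ⬝ x) ⬝ e := by rw [← hex, ← hc x]; simp only [h.assoc]
    _ = x ⬝ e := by rw [← h.assoc, h.op_iv_op]

end IsInverseSemigroup

namespace WeakBrace

local infixl:65 " ⊹ " => WeakBrace.add
local infixl:70 " ⍟ " => WeakBrace.mul

section

variable {S : Type*} [WeakBrace S]

theorem isInverseSemigroup_add : IsInverseSemigroup (add : S → S → S) neg :=
  ⟨WeakBrace.add_assoc, add_reg, neg_reg, neg_unique⟩

theorem isInverseSemigroup_mul : IsInverseSemigroup (mul : S → S → S) inv :=
  ⟨WeakBrace.mul_assoc, mul_reg, inv_reg, inv_unique⟩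

theorem IsIdem.add_self {e : S} (he : IsIdem e) : e ⊹ e = e := he

theorem neg_eq_self_of_isIdem {e : S} (he : IsIdem e) : neg e = e :=
  isInverseSemigroup_add.iv_eq_self_of_idem he

theorem isIdem_neg_add_self (a : S) : IsIdem (neg a ⊹ a) :=
  isInverseSemigroup_add.iv_op_idem a

theorem IsIdem.mul_self {e : S} (he : IsIdem e) : e ⍟ e = e := by
  have h := mul_reg e
  rwa [link, neg_eq_self_of_isIdem he, he.add_self] at h

theorem isIdem_of_mul_self {e : S} (he : e ⍟ e = e) : IsIdem e := by
  have h := link e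
  rw [isInverseSemigroup_mul.iv_eq_self_of_idem he, he] at h
  rw [IsIdem, h]
  exact isIdem_neg_add_self e

theorem IsIdem.add {e f : S} (he : IsIdem e) (hf : IsIdem f) : IsIdem (e ⊹ f) :=
  isInverseSemigroup_add.idem_op_idem he hf

theorem IsIdem.mul {e f : S} (he : IsIdem e) (hf : IsIdem f) : IsIdem (e ⍟ f) :=
  isIdem_of_mul_self (isInverseSemigroup_mul.idem_op_idem he.mul_self hf.mul_self)

theorem lam_add (a b c : S) : lam a (b ⊹ c) = lam a b ⊹ lam a c := by
  simp only [lam, distrib, WeakBrace.add_assoc]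

theorem lam_neg (a b : S) : lam a (neg b) = neg (lam a b) :=
  isInverseSemigroup_add.eq_iv _ _ (by rw [← lam_add, ← lam_add, add_reg])
    (by rw [← lam_add, ← lam_add, neg_reg])

theorem lam_eq_neg_add_self_of_isIdem {e : S} (he : IsIdem e) (a : S) :
    lam a e = neg (a ⍟ e) ⊹ a ⍟ e := by
  have hu : a ⍟ e ⊹ (neg a ⊹ a ⍟ e) = a ⍟ e := by
    rw [← WeakBrace.add_assoc, ← distrib, he.add_self]
  have hlam : IsIdem (lam a e) := by
    rw [IsIdem, ← lam_add, he.add_self]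
  have hl : lam a e ⊹ (neg (a ⍟ e) ⊹ a ⍟ e) = lam a e := by
    rw [lam, WeakBrace.add_assoc, ← WeakBrace.add_assoc (a ⍟ e), add_reg]
  have hr : neg (a ⍟ e) ⊹ a ⍟ e ⊹ lam a e = neg (a ⍟ e) ⊹ a ⍟ e := by
    rw [lam, WeakBrace.add_assoc, hu]
  rw [← hl, isInverseSemigroup_add.idem_comm hlam (isIdem_neg_add_self _), hr]

theorem IsIdem.add_mul_eq_mul {e f : S} (hf : IsIdem f) (he : IsIdem e) :
    f ⊹ f ⍟ e = f ⍟ e := by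
  have h := lam_eq_neg_add_self_of_isIdem he f
  rwa [lam, neg_eq_self_of_isIdem hf, neg_eq_self_of_isIdem (hf.mul he), (hf.mul he).add_self]
    at h

theorem mul_eq_of_add_eq {p q : S} (hp : IsIdem p) (hq : IsIdem q) (hpq : p ⊹ q = p) :
    p ⍟ q = p :=
  calc p ⍟ q = p ⊹ p ⍟ q := (hp.add_mul_eq_mul hq).symm
    _ = p ⍟ p ⊹ neg p ⊹ p ⍟ q := by
        rw [hp.mul_self, neg_eq_self_of_isIdem hp, hp.add_self]
    _ = p := by rw [← distrib, hpq, hp.mul_self]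

theorem IsIdem.mul_eq_add {e f : S} (hf : IsIdem f) (he : IsIdem e) : f ⍟ e = f ⊹ e := by
  have hcomm : e ⊹ f = f ⊹ e := isInverseSemigroup_add.idem_comm he hf
  have hsf : f ⍟ e ⊹ f = f ⍟ e := by
    rw [← isInverseSemigroup_add.idem_comm hf (hf.mul he), hf.add_mul_eq_mul he]
  have hse : f ⍟ e ⊹ e = f ⍟ e := by
    rw [← isInverseSemigroup_add.idem_comm he (hf.mul he),
      isInverseSemigroup_mul.idem_comm hf.mul_self he.mul_self, he.add_mul_eq_mul hf]
  have hsp : f ⍟ e ⊹ (f ⊹ e) = f ⍟ e := by rw [← WeakBrace.add_assoc, hsf, hse]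
  have hpf : f ⊹ e ⊹ f = f ⊹ e := by
    rw [WeakBrace.add_assoc, hcomm, ← WeakBrace.add_assoc, hf.add_self]
  have hpe : f ⊹ e ⊹ e = f ⊹ e := by rw [WeakBrace.add_assoc, he.add_self]
  have hps : (f ⊹ e) ⍟ (f ⍟ e) = f ⊹ e := by
    rw [← WeakBrace.mul_assoc, mul_eq_of_add_eq (hf.add he) hf hpf,
      mul_eq_of_add_eq (hf.add he) he hpe]
  calc f ⍟ e = f ⍟ e ⍟ (f ⊹ e) := (mul_eq_of_add_eq (hf.mul he) (hf.add he) hsp).symm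
    _ = (f ⊹ e) ⍟ (f ⍟ e) :=
        isInverseSemigroup_mul.idem_comm (hf.mul he).mul_self (hf.add he).mul_self
    _ = f ⊹ e := hps

end

section

variable {S : Type*} [DualWeakBrace S]

theorem inv_mul_self (a : S) : inv a ⍟ a = neg a ⊹ a := by
  rw [← DualWeakBrace.clifford, link]

theorem neg_inv_add_inv (a : S) : neg (inv a) ⊹ inv a = neg a ⊹ a := by
  rw [← link, isInverseSemigroup_mul.iv_iv, inv_mul_self]

theorem neg_add_self_add_add_neg_self (a : S) : neg a ⊹ a ⊹ (a ⊹ neg a) = neg a ⊹ a := by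
  have hf := isIdem_neg_add_self a
  have hg : IsIdem (a ⊹ neg a) := isInverseSemigroup_add.op_iv_idem a
  -- `λ_a` fixes `f = -a + a = a⁻ ∘ a`; writing `f = -a⁻ + a⁻` shows `λ_a(f) = -x + x` for
  -- `x = λ_a(a⁻) = -a + f`
  have hfix : lam a (neg a ⊹ a) = neg a ⊹ a := by
    rw [lam, ← inv_mul_self, ← WeakBrace.mul_assoc, mul_reg, inv_mul_self]
  have hsplit : lam a (neg a ⊹ a) = neg (lam a (inv a)) ⊹ lam a (inv a) := by
    rw [← neg_inv_add_inv a, lam_add, lam_neg]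
  rw [hfix, lam, link, isInverseSemigroup_add.iv_op, isInverseSemigroup_add.iv_iv,
    neg_eq_self_of_isIdem hf] at hsplit
  generalize neg a ⊹ a = f at hf hsplit ⊢
  calc f ⊹ (a ⊹ neg a) = f ⊹ f ⊹ (a ⊹ neg a) := by rw [hf.add_self]
    _ = f ⊹ ((a ⊹ neg a) ⊹ f) := by
        rw [WeakBrace.add_assoc, isInverseSemigroup_add.idem_comm hg hf]
    _ = f ⊹ a ⊹ (neg a ⊹ f) := by simp only [WeakBrace.add_assoc]
    _ = f := hsplit.symm

theorem add_neg_self_comm (a : S) : a ⊹ neg a = neg a ⊹ a := by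
  have h := neg_add_self_add_add_neg_self (neg a)
  rw [isInverseSemigroup_add.iv_iv] at h
  rw [← h, ← isInverseSemigroup_add.idem_comm (isIdem_neg_add_self a)
    (isInverseSemigroup_add.op_iv_idem a), neg_add_self_add_add_neg_self]

theorem IsIdem.add_comm {e : S} (he : IsIdem e) (x : S) : e ⊹ x = x ⊹ e :=
  isInverseSemigroup_add.op_comm_of_idem add_neg_self_comm he x

theorem IsIdem.mul_comm {e : S} (he : IsIdem e) (x : S) : e ⍟ x = x ⍟ e :=
  isInverseSemigroup_mul.op_comm_of_idem DualWeakBrace.clifford he.mul_self x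

theorem neg_mul_add_mul_of_isIdem {e : S} (he : IsIdem e) (a : S) :
    neg (a ⍟ e) ⊹ a ⍟ e = neg a ⊹ a ⊹ e := by
  rw [← link, isInverseSemigroup_mul.iv_op, isInverseSemigroup_mul.iv_eq_self_of_idem he.mul_self,
    WeakBrace.mul_assoc, ← WeakBrace.mul_assoc e, he.mul_self, he.mul_comm, ← WeakBrace.mul_assoc,
    link, (isIdem_neg_add_self a).mul_eq_add he]

theorem mul_eq_add_of_isIdem {e : S} (he : IsIdem e) (a : S) : a ⍟ e = a ⊹ e := by
  have hu : neg (a ⍟ e) ⊹ a ⍟ e = neg a ⊹ a ⊹ e := neg_mul_add_mul_of_isIdem he a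
  have hu0 : neg (a ⍟ e) ⊹ a ⍟ e ⊹ a ⍟ e = a ⍟ e := by rw [← add_neg_self_comm, add_reg]
  have hfu : neg a ⊹ a ⊹ a ⍟ e = a ⍟ e :=
    calc neg a ⊹ a ⊹ a ⍟ e = neg a ⊹ a ⊹ (neg a ⊹ a ⊹ e ⊹ a ⍟ e) := by rw [← hu, hu0]
      _ = neg a ⊹ a ⊹ e ⊹ a ⍟ e := by
          rw [← WeakBrace.add_assoc, ← WeakBrace.add_assoc, (isIdem_neg_add_self a).add_self]
      _ = a ⍟ e := by rw [← hu, hu0]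
  calc a ⍟ e = a ⊹ lam a e := by rw [lam, ← WeakBrace.add_assoc, add_neg_self_comm, hfu]
    _ = a ⊹ e := by
        rw [lam_eq_neg_add_self_of_isIdem he, hu, ← WeakBrace.add_assoc, ← WeakBrace.add_assoc,
          add_reg]

theorem cdot_of_isIdem_right {e : S} (he : IsIdem e) (a : S) : cdot a e = neg a ⊹ a ⊹ e := by
  rw [cdot, mul_eq_add_of_isIdem he, neg_eq_self_of_isIdem he, WeakBrace.add_assoc,
    WeakBrace.add_assoc, he.add_self, ← WeakBrace.add_assoc]

theorem cdot_of_isIdem_left {e : S} (he : IsIdem e) (a : S) : cdot e a = neg a ⊹ a ⊹ e := by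
  rw [cdot, he.mul_comm, mul_eq_add_of_isIdem he, neg_eq_self_of_isIdem he, ← WeakBrace.add_assoc,
    he.add_comm a, WeakBrace.add_assoc a e e, he.add_self, WeakBrace.add_assoc, he.add_comm,
    ← WeakBrace.add_assoc, add_neg_self_comm]

end

end WeakBrace

open WeakBrace
theorem stmt3 {S : Type*} [DualWeakBrace S] (a e : S) (he : IsIdem e) :
    cdot a e = cdot e a ∧ IsIdem (cdot a e) := by
  rw [cdot_of_isIdem_right he, cdot_of_isIdem_left he]
  exact ⟨rfl, (isIdem_neg_add_self a).add he⟩
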